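/- arXiv:math/9809209 — 3 statements merged into one kernel-verified Lean document; each statement's English description precedes it below -/
import Mathlib

section
/- Let H, K be subgroups of a finite group G. The ℤ-module Hom_{ℤ[G]}(ℤ[G/H], ℤ[G/K]) is free with basis indexed by the double cosets H\G/K; explicitly, the map sending a double coset HgK to the homomorphism determined by H ↦ Σ (right K-cosets in HgK) is a ℤ-module isomorphism ℤ[H\G/K] ≅ Hom_{ℤ[G]}(ℤ[G/H], ℤ[G/K]). -/
open Pointwise
open scoped Classical

noncomputable section

/-- The double coset operator attached to a left-`H`-invariant, right-`K`-invariant subset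
`S ⊆ G`: the basis vector `xH` of `ℤ[G/H]` is sent to the sum of the `K`-cosets in `x·S`. -/
def T (G : Type) [Group G] [Fintype G] (H K : Subgroup G) (S : Set G)
    (v : (G ⧸ H) → ℤ) (c : G ⧸ K) : ℤ :=
  ∑ d : G ⧸ H, v d * (if c ∈ QuotientGroup.mk '' ((Quotient.out d) • S) then 1 else 0)

/-- The map `Θ : ℤ[H\\G/K] → Hom(ℤ[G/H], ℤ[G/K])`, sending a formal `ℤ`-linear combination of
double cosets to the corresponding sum of double coset operators. -/
def Theta (G : Type) [Group G] [Fintype G] (H K : Subgroup G)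
    (w : DoubleCoset.Quotient (H : Set G) (K : Set G) →₀ ℤ)
    (v : (G ⧸ H) → ℤ) : (G ⧸ K) → ℤ :=
  ∑ D ∈ w.support,
    w D • T G H K (DoubleCoset.doubleCoset (Quotient.out D) (H : Set G) (K : Set G)) v

/-- `F : ℤ[G/H] → ℤ[G/K]` is a `ℤ[G]`-module homomorphism: additive, `ℤ`-linear and
`G`-equivariant (with `(g • v)(x) = v(g⁻¹ • x)`). -/
def IsZGHom (G : Type) [Group G] [Fintype G] (H K : Subgroup G)
    (F : ((G ⧸ H) → ℤ) → ((G ⧸ K) → ℤ)) : Prop :=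
  (∀ u v, F (u + v) = F u + F v) ∧ (∀ (n : ℤ) v, F (n • v) = n • F v) ∧
  (∀ (g : G) (v : (G ⧸ H) → ℤ), F (fun x => v (g⁻¹ • x)) = fun c => F v (g⁻¹ • c))

section Aux

set_option linter.unusedSectionVars false

variable {G : Type} [Group G] [Fintype G] (H K : Subgroup G)

lemma mk_smul_eq (g a : G) :
    (g • (QuotientGroup.mk a : G ⧸ H)) = QuotientGroup.mk (g * a) := rfl

/-- The class `DoubleCoset.mk H K (x⁻¹ * y)` only depends on `xH` and `yK`. -/
lemma cls_invariant {x x' y y' : G}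
    (hx : (QuotientGroup.mk x : G ⧸ H) = QuotientGroup.mk x')
    (hy : (QuotientGroup.mk y : G ⧸ K) = QuotientGroup.mk y') :
    DoubleCoset.mk H K (x⁻¹ * y) = DoubleCoset.mk H K (x'⁻¹ * y') := by
  rw [QuotientGroup.eq] at hx hy
  rw [DoubleCoset.eq]
  exact ⟨(x⁻¹ * x')⁻¹, H.inv_mem hx, y⁻¹ * y', hy, by group⟩

lemma mem_image_smul_doset (x g₀ : G) (c : G ⧸ K) :
    c ∈ QuotientGroup.mk '' (x • DoubleCoset.doubleCoset g₀ (H : Set G) (K : Set G)) ↔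
      DoubleCoset.mk H K (x⁻¹ * Quotient.out c) = DoubleCoset.mk H K g₀ := by
  constructor
  · rintro ⟨s, hs, hsc⟩
    rw [Set.mem_smul_set_iff_inv_smul_mem, smul_eq_mul] at hs
    obtain ⟨h, hh, k, hk, heq⟩ := DoubleCoset.mem_doubleCoset.1 hs
    have hK : s⁻¹ * Quotient.out c ∈ K := by
      rw [← QuotientGroup.eq, hsc, QuotientGroup.out_eq']
    have : x⁻¹ * Quotient.out c = h * g₀ * (k * (s⁻¹ * Quotient.out c)) := by
      rw [← mul_assoc, ← heq]; group
    exact ((DoubleCoset.eq H K g₀ _).2 ⟨h, hh, _, K.mul_mem hk hK, this⟩).symm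
  · intro hcls
    obtain ⟨h, hh, k, hk, heq⟩ := (DoubleCoset.eq H K g₀ _).1 hcls.symm
    refine ⟨Quotient.out c, ?_, QuotientGroup.out_eq' c⟩
    rw [Set.mem_smul_set_iff_inv_smul_mem, smul_eq_mul, heq]
    exact DoubleCoset.mem_doubleCoset.2 ⟨h, hh, k, hk, rfl⟩

/-- Explicit formula for `Theta`. -/
lemma Theta_apply (w : DoubleCoset.Quotient (H : Set G) (K : Set G) →₀ ℤ)
    (v : (G ⧸ H) → ℤ) (c : G ⧸ K) :
    Theta G H K w v c =
      ∑ d : G ⧸ H, v d * w (DoubleCoset.mk H K ((Quotient.out d)⁻¹ * Quotient.out c)) := by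
  unfold Theta T
  rw [Finset.sum_apply]
  have : ∀ D ∈ w.support,
      (w D • fun c' => ∑ d : G ⧸ H, v d *
        (if c' ∈ QuotientGroup.mk ''
            ((Quotient.out d) • DoubleCoset.doubleCoset (Quotient.out D) (H : Set G) (K : Set G))
          then 1 else 0)) c
      = ∑ d : G ⧸ H, (if DoubleCoset.mk H K ((Quotient.out d)⁻¹ * Quotient.out c) = D
          then w D * v d else 0) := by
    intro D _
    rw [Pi.smul_apply, smul_eq_mul, Finset.mul_sum]
    refine Finset.sum_congr rfl fun d _ => ?_
    rw [mem_image_smul_doset]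
    have h2 : (DoubleCoset.mk H K ((Quotient.out d)⁻¹ * Quotient.out c) = DoubleCoset.mk H K (Quotient.out D))
        ↔ (DoubleCoset.mk H K ((Quotient.out d)⁻¹ * Quotient.out c) = D) := by
      rw [DoubleCoset.out_eq']
    rw [if_congr h2 rfl rfl]
    simp only [mul_ite, mul_one, mul_zero]
  rw [Finset.sum_congr rfl this, Finset.sum_comm]
  refine Finset.sum_congr rfl fun d _ => ?_
  rw [Finset.sum_ite_eq w.support _ (fun D => w D * v d)]
  split_ifs with hmem
  · exact mul_comm _ _
  · rw [Finsupp.notMem_support_iff.1 hmem, mul_zero]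

lemma cls_smul (g : G) (d : G ⧸ H) (c : G ⧸ K) :
    DoubleCoset.mk H K ((Quotient.out (g • d))⁻¹ * Quotient.out c)
      = DoubleCoset.mk H K ((Quotient.out d)⁻¹ * Quotient.out (g⁻¹ • c)) := by
  have h1 : (QuotientGroup.mk (Quotient.out (g • d)) : G ⧸ H)
      = QuotientGroup.mk (g * Quotient.out d) := by
    rw [QuotientGroup.out_eq', ← mk_smul_eq H g (Quotient.out d), QuotientGroup.out_eq']
  have h2 : (QuotientGroup.mk (g⁻¹ * Quotient.out c) : G ⧸ K)
      = QuotientGroup.mk (Quotient.out (g⁻¹ • c)) := by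
    rw [QuotientGroup.out_eq', ← mk_smul_eq K g⁻¹ (Quotient.out c), QuotientGroup.out_eq']
  calc DoubleCoset.mk H K ((Quotient.out (g • d))⁻¹ * Quotient.out c)
      = DoubleCoset.mk H K ((g * Quotient.out d)⁻¹ * Quotient.out c) :=
        cls_invariant H K h1 rfl
    _ = DoubleCoset.mk H K ((Quotient.out d)⁻¹ * (g⁻¹ * Quotient.out c)) := by
        rw [mul_inv_rev, mul_assoc]
    _ = DoubleCoset.mk H K ((Quotient.out d)⁻¹ * Quotient.out (g⁻¹ • c)) :=
        cls_invariant H K rfl h2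

/-- The delta function at the trivial coset. -/
def delta : (G ⧸ H) → ℤ := fun x => if x = QuotientGroup.mk 1 then 1 else 0

lemma Theta_delta (w : DoubleCoset.Quotient (H : Set G) (K : Set G) →₀ ℤ)
    (D : DoubleCoset.Quotient (H : Set G) (K : Set G)) :
    Theta G H K w (delta H) (QuotientGroup.mk (Quotient.out D)) = w D := by
  rw [Theta_apply]
  unfold delta
  simp only [ite_mul, one_mul, zero_mul]
  rw [Finset.sum_ite_eq' Finset.univ (QuotientGroup.mk 1 : G ⧸ H), if_pos (Finset.mem_univ _)]
  have h1 : DoubleCoset.mk H K ((Quotient.out (QuotientGroup.mk (1:G) : G ⧸ H))⁻¹ *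
      Quotient.out (QuotientGroup.mk (Quotient.out D) : G ⧸ K))
      = DoubleCoset.mk H K ((1:G)⁻¹ * Quotient.out D) :=
    cls_invariant H K (QuotientGroup.out_eq' _) (QuotientGroup.out_eq' _)
  rw [h1, inv_one, one_mul, DoubleCoset.out_eq']

end Aux

/-- **Lemma 4.2.** `Θ` is a `ℤ`-module isomorphism
`ℤ[H\\G/K] ≅ Hom_{ℤ[G]}(ℤ[G/H], ℤ[G/K])`: it is additive, lands in the `ℤ[G]`-module
homomorphisms, and every `ℤ[G]`-module homomorphism is `Θ w` for a unique `w`. -/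
theorem Theta_bijective (G : Type) [Group G] [Fintype G] (H K : Subgroup G) :
    (∀ w w' : DoubleCoset.Quotient (H : Set G) (K : Set G) →₀ ℤ,
      Theta G H K (w + w') = Theta G H K w + Theta G H K w') ∧
    (∀ w, IsZGHom G H K (Theta G H K w)) ∧
    (∀ F : ((G ⧸ H) → ℤ) → ((G ⧸ K) → ℤ), IsZGHom G H K F → ∃! w, Theta G H K w = F) := by
  refine ⟨?_, ?_, ?_⟩
  · intro w w'
    funext v c
    simp only [Pi.add_apply, Theta_apply, Finsupp.add_apply, mul_add, Finset.sum_add_distrib]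
  · intro w
    refine ⟨fun u v => ?_, fun n v => ?_, fun g v => ?_⟩
    · funext c
      simp only [Pi.add_apply, Theta_apply, add_mul, Finset.sum_add_distrib]
    · funext c
      simp only [Pi.smul_apply, smul_eq_mul, Theta_apply, Finset.mul_sum, mul_assoc]
    · funext c
      rw [Theta_apply, Theta_apply]
      exact (Fintype.sum_bijective (fun d : G ⧸ H => g • d) (MulAction.bijective g)
        (fun d => v d * w (DoubleCoset.mk H K ((Quotient.out d)⁻¹ * Quotient.out (g⁻¹ • c))))
        (fun d => v (g⁻¹ • d) * w (DoubleCoset.mk H K ((Quotient.out d)⁻¹ * Quotient.out c)))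
        (fun d => by simp only [inv_smul_smul, cls_smul])).symm
  · intro F hF
    obtain ⟨hadd, hsmul, hG⟩ := hF
    set F' : ((G ⧸ H) → ℤ) →+ ((G ⧸ K) → ℤ) := AddMonoidHom.mk' F hadd with hF'
    have hFeq : ∀ v, F v = F' v := fun v => rfl
    set φ : (G ⧸ K) → ℤ := F (delta H) with hφ
    -- H-invariance of φ
    have hHinv : ∀ h ∈ H, ∀ c : G ⧸ K, φ (h⁻¹ • c) = φ c := by
      intro h hh c
      have hδ : (fun x : G ⧸ H => delta H (h⁻¹ • x)) = delta H := by
        funext x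
        unfold delta
        congr 1
        rw [eq_iff_iff]
        constructor
        · intro hx
          have : x = h • (QuotientGroup.mk 1 : G ⧸ H) := by
            rw [← hx, smul_inv_smul]
          rw [this, mk_smul_eq H, mul_one, QuotientGroup.eq]
          simpa using H.inv_mem hh
        · intro hx
          rw [hx, mk_smul_eq H, mul_one, QuotientGroup.eq]
          simpa using hh
      have := hG h (delta H)
      rw [hδ] at this
      exact (congrFun this c).symm
    -- decomposition of F
    have hFdec : ∀ (v : (G ⧸ H) → ℤ) (c : G ⧸ K),
        F v c = ∑ d : G ⧸ H, v d * φ ((Quotient.out d)⁻¹ • c) := by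
      intro v c
      have hv : v = ∑ d : G ⧸ H, v d • (fun x : G ⧸ H => if x = d then (1:ℤ) else 0) := by
        funext x
        rw [Finset.sum_apply]
        simp [Pi.smul_apply]
      have hδd : ∀ d : G ⧸ H, (fun x : G ⧸ H => if x = d then (1:ℤ) else 0)
          = fun x => delta H ((Quotient.out d)⁻¹ • x) := by
        intro d
        funext x
        unfold delta
        congr 1
        rw [eq_iff_iff]
        constructor
        · intro hx
          rw [hx, ← QuotientGroup.out_eq' d, mk_smul_eq H, QuotientGroup.eq]
          simp [H.one_mem]
        · intro hx
          have hx2 : x = Quotient.out d • ((Quotient.out d)⁻¹ • x) := by rw [smul_inv_smul]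
          rw [hx2, hx, mk_smul_eq H, mul_one, QuotientGroup.out_eq']
      calc F v c = F (∑ d : G ⧸ H, v d • (fun x : G ⧸ H => if x = d then (1:ℤ) else 0)) c := by
            rw [← hv]
        _ = (∑ d : G ⧸ H, F (v d • (fun x : G ⧸ H => if x = d then (1:ℤ) else 0))) c := by
            rw [hFeq, map_sum]
            rfl
        _ = ∑ d : G ⧸ H, v d * φ ((Quotient.out d)⁻¹ • c) := by
            rw [Finset.sum_apply]
            refine Finset.sum_congr rfl fun d _ => ?_
            rw [hsmul, hδd d, hG (Quotient.out d) (delta H)]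
            simp [smul_eq_mul, hφ]
    -- candidate w
    haveI : Finite (DoubleCoset.Quotient (H : Set G) (K : Set G)) :=
      Quotient.finite (DoubleCoset.setoid (H : Set G) (K : Set G))
    set w : DoubleCoset.Quotient (H : Set G) (K : Set G) →₀ ℤ :=
      Finsupp.equivFunOnFinite.symm
        (fun D => φ (QuotientGroup.mk (Quotient.out D))) with hw
    have hwD : ∀ D, w D = φ (QuotientGroup.mk (Quotient.out D)) := fun D => rfl
    have hmain : Theta G H K w = F := by
      funext v c
      rw [Theta_apply, hFdec]
      refine Finset.sum_congr rfl fun d _ => ?_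
      congr 1
      rw [hwD]
      set a := (Quotient.out d)⁻¹ * Quotient.out c with ha
      obtain ⟨h, hh, k, hk, heq⟩ := (DoubleCoset.eq H K (Quotient.out (DoubleCoset.mk H K a)) a).1
        (DoubleCoset.out_eq' H K (DoubleCoset.mk H K a))
      -- a = h * out (mk a) * k, so out (mk a) = h⁻¹ * a * k⁻¹
      have hout : Quotient.out (DoubleCoset.mk H K a) = h⁻¹ * a * k⁻¹ := by
        conv_rhs => rw [heq]
        group
      have h1 : (QuotientGroup.mk (Quotient.out (DoubleCoset.mk H K a)) : G ⧸ K)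
          = QuotientGroup.mk (h⁻¹ * a) := by
        rw [hout, QuotientGroup.eq]
        have hsim : (h⁻¹ * a * k⁻¹)⁻¹ * (h⁻¹ * a) = k := by group
        rw [hsim]; exact hk
      have h2 : (QuotientGroup.mk (h⁻¹ * a) : G ⧸ K) = h⁻¹ • QuotientGroup.mk a :=
        (mk_smul_eq K h⁻¹ a).symm
      have h3 : (QuotientGroup.mk a : G ⧸ K) = (Quotient.out d)⁻¹ • c := by
        rw [ha, ← mk_smul_eq K, QuotientGroup.out_eq']
      rw [h1, h2, h3, hHinv h hh]
    refine ⟨w, hmain, ?_⟩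
    intro w' hw'
    ext D
    rw [← Theta_delta H K w' D, hw', ← hmain, Theta_delta]
end
end

section
/- Let p be an odd prime, G = GL₂(𝔽_p), C the diagonal torus and N = C ∪ ωC its normalizer, where ω = [[0,1],[1,0]]. Then every element of G lies either in N or in a double coset Nσ_tN for some t ∈ 𝔽_p \ {1}, where σ_t = [[1,1],[1,t]], and Nσ_tN = Nσ_{t'}N iff t' = t or (t ≠ 0 and t' = t⁻¹). Thus ℤ[N\G/N] is free with basis {N} ∪ {Nσ_tN : t ∈ (𝔽_p∖{1})/∼} with t ∼ t⁻¹ for t ≠ 0. -/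
open Matrix Pointwise
open scoped Classical

noncomputable section

abbrev GL2 (p : ℕ) := GL (Fin 2) (ZMod p)

namespace Chen

variable (p : ℕ)

/-- The Borel subgroup of upper triangular matrices in `GL₂(𝔽_p)`. -/
def Bor : Subgroup (GL2 p) where
  carrier := {g | (g : Matrix (Fin 2) (Fin 2) (ZMod p)) 1 0 = 0}
  one_mem' := by
    show ((1 : GL2 p) : Matrix (Fin 2) (Fin 2) (ZMod p)) 1 0 = 0
    simp [Matrix.one_apply]
  mul_mem' := by
    intro a b ha hb
    show ((a * b : GL2 p) : Matrix (Fin 2) (Fin 2) (ZMod p)) 1 0 = 0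
    simp only [Set.mem_setOf_eq] at ha hb
    rw [Units.val_mul, Matrix.mul_apply, Fin.sum_univ_two, ha, hb]
    ring
  inv_mem' := by
    intro a ha
    show ((a⁻¹ : GL2 p) : Matrix (Fin 2) (Fin 2) (ZMod p)) 1 0 = 0
    simp only [Set.mem_setOf_eq] at ha
    rw [Matrix.coe_units_inv, Matrix.inv_def]
    simp [Matrix.adjugate_fin_two, ha]

/-- The split (diagonal) Cartan subgroup of `GL₂(𝔽_p)`. -/
def Cs : Subgroup (GL2 p) where
  carrier := {g | (g : Matrix (Fin 2) (Fin 2) (ZMod p)) 0 1 = 0 ∧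
      (g : Matrix (Fin 2) (Fin 2) (ZMod p)) 1 0 = 0}
  one_mem' := by
    constructor <;>
    · show ((1 : GL2 p) : Matrix (Fin 2) (Fin 2) (ZMod p)) _ _ = 0
      simp [Matrix.one_apply]
  mul_mem' := by
    intro a b ha hb
    simp only [Set.mem_setOf_eq] at ha hb ⊢
    constructor <;>
    · show ((a * b : GL2 p) : Matrix (Fin 2) (Fin 2) (ZMod p)) _ _ = 0
      rw [Units.val_mul, Matrix.mul_apply, Fin.sum_univ_two]
      simp [ha.1, ha.2, hb.1, hb.2]
  inv_mem' := by
    intro a ha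
    simp only [Set.mem_setOf_eq] at ha ⊢
    constructor <;>
    · show ((a⁻¹ : GL2 p) : Matrix (Fin 2) (Fin 2) (ZMod p)) _ _ = 0
      rw [Matrix.coe_units_inv, Matrix.inv_def]
      simp [Matrix.adjugate_fin_two, ha.1, ha.2]

/-- A (generalized) Cartan subgroup `{[[x, u*y],[y, x]]}` of `GL₂(𝔽_p)`;
for `u = λ` a non-square this is the nonsplit Cartan `C'`, for `u = 1` the split Cartan `C''`. -/
def Cgen (u : ZMod p) : Subgroup (GL2 p) where
  carrier := {g | (g : Matrix (Fin 2) (Fin 2) (ZMod p)) 0 0 =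
      (g : Matrix (Fin 2) (Fin 2) (ZMod p)) 1 1 ∧
      (g : Matrix (Fin 2) (Fin 2) (ZMod p)) 0 1 =
      u * (g : Matrix (Fin 2) (Fin 2) (ZMod p)) 1 0}
  one_mem' := by
    constructor <;> simp [Matrix.one_apply]
  mul_mem' := by
    intro a b ha hb
    simp only [Set.mem_setOf_eq] at ha hb ⊢
    obtain ⟨ha1, ha2⟩ := ha
    obtain ⟨hb1, hb2⟩ := hb
    constructor <;>
    · show ((a * b : GL2 p) : Matrix (Fin 2) (Fin 2) (ZMod p)) _ _ =
        _
      simp only [Units.val_mul, Matrix.mul_apply, Fin.sum_univ_two]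
      rw [ha1, ha2, hb1, hb2]
      ring
  inv_mem' := by
    intro a ha
    simp only [Set.mem_setOf_eq] at ha ⊢
    obtain ⟨ha1, ha2⟩ := ha
    constructor <;>
    · show ((a⁻¹ : GL2 p) : Matrix (Fin 2) (Fin 2) (ZMod p)) _ _ = _
      rw [Matrix.coe_units_inv, Matrix.inv_def]
      simp [Matrix.adjugate_fin_two, ha1, ha2]
      try ring

/-- `N`, the normalizer of the split (diagonal) Cartan subgroup. -/
def Nspl : Subgroup (GL2 p) := Subgroup.normalizer (Cs p : Set (GL2 p))

/-- `N'`, the normalizer of the nonsplit Cartan subgroup (for `λ` a non-square). -/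
def Nns (lam : ZMod p) : Subgroup (GL2 p) := Subgroup.normalizer (Cgen p lam : Set (GL2 p))

/-- `N''`, the normalizer of the split Cartan `C'' = {[[x,y],[y,x]]}`. -/
def Nspl' : Subgroup (GL2 p) := Subgroup.normalizer (Cgen p 1 : Set (GL2 p))

/-- The double coset `N σ_t N` where `σ_t = [[1,1],[1,t]]`. -/
def dosetN (t : ZMod p) : Set (GL2 p) :=
  {g | ∃ a ∈ Nspl p, ∃ b ∈ Nspl p,
    ((a⁻¹ * g * b⁻¹ : GL2 p) : Matrix (Fin 2) (Fin 2) (ZMod p)) = !![1, 1; 1, t]}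

/-- The double coset operator `ℝ[G/H] → ℝ[G/K]` (coefficients in `R`) attached to a
left-`H`-invariant, right-`K`-invariant set `S ⊆ G`: the basis vector `xH` is sent to the
sum of the `K`-cosets contained in `x·S`. -/
def T (R : Type) [CommRing R] {G : Type} [Group G] [Fintype G] (H K : Subgroup G)
    (S : Set G) : ((G ⧸ H) → R) →ₗ[R] ((G ⧸ K) → R) where
  toFun v c := ∑ d : G ⧸ H,
    v d * (if c ∈ QuotientGroup.mk '' ((Quotient.out d) • S) then 1 else 0)
  map_add' := by
    intro u v
    funext c
    simp only [Pi.add_apply]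
    rw [← Finset.sum_add_distrib]
    refine Finset.sum_congr rfl fun d _ => ?_
    ring
  map_smul' := by
    intro a v
    funext c
    simp only [Pi.smul_apply, smul_eq_mul, RingHom.id_apply]
    rw [Finset.mul_sum]
    refine Finset.sum_congr rfl fun d _ => ?_
    ring

end Chen

namespace Chen

variable {p : ℕ} [Fact p.Prime]

local notation "Mat" => Matrix (Fin 2) (Fin 2) (ZMod p)

lemma mem_Cs_iff (g : GL2 p) :
    g ∈ Cs p ↔ (g : Mat) 0 1 = 0 ∧ (g : Mat) 1 0 = 0 := Iff.rfl

def mk2 (A B : Mat) (h1 : A * B = 1) (h2 : B * A = 1) : GL2 p := ⟨A, B, h1, h2⟩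

@[simp] lemma mk2_val (A B : Mat) (h1 : A * B = 1) (h2 : B * A = 1) :
    ((mk2 A B h1 h2 : GL2 p) : Mat) = A := rfl

@[simp] lemma mk2_inv_val (A B : Mat) (h1 : A * B = 1) (h2 : B * A = 1) :
    (((mk2 A B h1 h2)⁻¹ : GL2 p) : Mat) = B := rfl

lemma det_ne (g : GL2 p) : ((g : Mat)).det ≠ 0 := by
  have h : (g : Mat).det * ((g⁻¹ : GL2 p) : Mat).det = 1 := by
    rw [← Matrix.det_mul, ← Units.val_mul, mul_inv_cancel, Units.val_one, Matrix.det_one]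
  exact left_ne_zero_of_mul_eq_one h

lemma entries_det (g : GL2 p) :
    (g : Mat) 0 0 * (g : Mat) 1 1 - (g : Mat) 0 1 * (g : Mat) 1 0 ≠ 0 := by
  have := det_ne g
  rwa [Matrix.det_fin_two] at this

lemma mem_dosetN_iff (t : ZMod p) (g : GL2 p) :
    g ∈ dosetN p t ↔ ∃ a ∈ Nspl p, ∃ b ∈ Nspl p,
      (g : Mat) = (a : Mat) * !![1, 1; 1, t] * (b : Mat) := by
  constructor
  · rintro ⟨a, ha, b, hb, h⟩
    refine ⟨a, ha, b, hb, ?_⟩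
    have key : (a * (a⁻¹ * g * b⁻¹) * b : GL2 p) = g := by group
    calc (g : Mat) = ((a * (a⁻¹ * g * b⁻¹) * b : GL2 p) : Mat) := by rw [key]
      _ = (a : Mat) * ((a⁻¹ * g * b⁻¹ : GL2 p) : Mat) * (b : Mat) := by
          simp [Units.val_mul]
      _ = (a : Mat) * !![1, 1; 1, t] * (b : Mat) := by rw [h]
  · rintro ⟨a, ha, b, hb, h⟩
    refine ⟨a, ha, b, hb, ?_⟩
    have h1 : ((a⁻¹ : GL2 p) : Mat) * (a : Mat) = 1 := by
      rw [← Units.val_mul, inv_mul_cancel, Units.val_one]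
    have h2 : (b : Mat) * ((b⁻¹ : GL2 p) : Mat) = 1 := by
      rw [← Units.val_mul, mul_inv_cancel, Units.val_one]
    show ((a⁻¹ * g * b⁻¹ : GL2 p) : Mat) = _
    have expand : ((a⁻¹ * g * b⁻¹ : GL2 p) : Mat)
        = ((a⁻¹ : GL2 p) : Mat) * (g : Mat) * ((b⁻¹ : GL2 p) : Mat) := by
      simp [Units.val_mul]
    rw [expand, h]
    have : ((a⁻¹ : GL2 p) : Mat) * ((a : Mat) * !![1, 1; 1, t] * (b : Mat)) *
        ((b⁻¹ : GL2 p) : Mat)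
        = (((a⁻¹ : GL2 p) : Mat) * (a : Mat)) * !![1, 1; 1, t] *
          ((b : Mat) * ((b⁻¹ : GL2 p) : Mat)) := by
      noncomm_ring
    rw [this, h1, h2, Matrix.one_mul, Matrix.mul_one]

end Chen
namespace Chen

variable {p : ℕ} [Fact p.Prime]

local notation "Mat" => Matrix (Fin 2) (Fin 2) (ZMod p)

lemma diag_mem_Nspl (g : GL2 p) (h1 : (g : Mat) 0 1 = 0) (h2 : (g : Mat) 1 0 = 0) :
    g ∈ Nspl p := by
  have hdet := entries_det g
  rw [h1, h2] at hdet
  have ha : (g : Mat) 0 0 ≠ 0 := fun h => by simp [h] at hdet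
  have hd : (g : Mat) 1 1 ≠ 0 := fun h => by simp [h] at hdet
  rw [Nspl, Subgroup.mem_normalizer_iff]
  intro h
  have e1 : ((g * h * g⁻¹ : GL2 p) : Mat) 0 1 =
      ((g : Mat) 0 0 * (g : Mat) 1 1)⁻¹ * ((g : Mat) 0 0 * (g : Mat) 0 0 * (h : Mat) 0 1) := by
    simp [Units.val_mul, Matrix.coe_units_inv, Matrix.inv_def, Matrix.adjugate_fin_two,
      Matrix.det_fin_two, h1, h2, Matrix.mul_apply, Fin.sum_univ_two, Ring.inverse_eq_inv']
    ring
  have e2 : ((g * h * g⁻¹ : GL2 p) : Mat) 1 0 =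
      ((g : Mat) 0 0 * (g : Mat) 1 1)⁻¹ * ((g : Mat) 1 1 * (g : Mat) 1 1 * (h : Mat) 1 0) := by
    simp [Units.val_mul, Matrix.coe_units_inv, Matrix.inv_def, Matrix.adjugate_fin_two,
      Matrix.det_fin_two, h1, h2, Matrix.mul_apply, Fin.sum_univ_two, Ring.inverse_eq_inv']
    ring
  rw [mem_Cs_iff, mem_Cs_iff, e1, e2]
  have hinv : ((g : Mat) 0 0 * (g : Mat) 1 1)⁻¹ ≠ 0 := inv_ne_zero (mul_ne_zero ha hd)
  constructor
  · rintro ⟨u, v⟩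
    simp [u, v]
  · rintro ⟨u, v⟩
    rcases mul_eq_zero.mp u with hu | hu
    · exact absurd hu hinv
    rcases mul_eq_zero.mp v with hv | hv
    · exact absurd hv hinv
    constructor
    · rcases mul_eq_zero.mp hu with h' | h'
      · exact absurd h' (mul_ne_zero ha ha)
      · exact h'
    · rcases mul_eq_zero.mp hv with h' | h'
      · exact absurd h' (mul_ne_zero hd hd)
      · exact h'

lemma adiag_mem_Nspl (g : GL2 p) (h1 : (g : Mat) 0 0 = 0) (h2 : (g : Mat) 1 1 = 0) :
    g ∈ Nspl p := by
  have hdet := entries_det g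
  rw [h1, h2] at hdet
  have hb : (g : Mat) 0 1 ≠ 0 := fun h => by simp [h] at hdet
  have hc : (g : Mat) 1 0 ≠ 0 := fun h => by simp [h] at hdet
  rw [Nspl, Subgroup.mem_normalizer_iff]
  intro h
  have e1 : ((g * h * g⁻¹ : GL2 p) : Mat) 0 1 =
      (0 - (g : Mat) 0 1 * (g : Mat) 1 0)⁻¹ * (-((g : Mat) 0 1 * (g : Mat) 0 1) * (h : Mat) 1 0) := by
    simp [Units.val_mul, Matrix.coe_units_inv, Matrix.inv_def, Matrix.adjugate_fin_two,
      Matrix.det_fin_two, h1, h2, Matrix.mul_apply, Fin.sum_univ_two, Ring.inverse_eq_inv']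
    ring
  have e2 : ((g * h * g⁻¹ : GL2 p) : Mat) 1 0 =
      (0 - (g : Mat) 0 1 * (g : Mat) 1 0)⁻¹ * (-((g : Mat) 1 0 * (g : Mat) 1 0) * (h : Mat) 0 1) := by
    simp [Units.val_mul, Matrix.coe_units_inv, Matrix.inv_def, Matrix.adjugate_fin_two,
      Matrix.det_fin_two, h1, h2, Matrix.mul_apply, Fin.sum_univ_two, Ring.inverse_eq_inv']
    ring
  rw [mem_Cs_iff, mem_Cs_iff, e1, e2]
  have hdet0 : (0 : ZMod p) - (g : Mat) 0 1 * (g : Mat) 1 0 ≠ 0 := by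
    intro h; exact hdet (by linear_combination h)
  have hinv : (0 - (g : Mat) 0 1 * (g : Mat) 1 0)⁻¹ ≠ 0 := inv_ne_zero hdet0
  constructor
  · rintro ⟨u, v⟩
    simp [u, v]
  · rintro ⟨u, v⟩
    rcases mul_eq_zero.mp u with hu | hu
    · exact absurd hu hinv
    rcases mul_eq_zero.mp v with hv | hv
    · exact absurd hv hinv
    constructor
    · rcases mul_eq_zero.mp hv with h' | h'
      · exact absurd h' (neg_ne_zero.mpr (mul_ne_zero hc hc))
      · exact h'
    · rcases mul_eq_zero.mp hu with h' | h'
      · exact absurd h' (neg_ne_zero.mpr (mul_ne_zero hb hb))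
      · exact h'

lemma Nspl_shape (h2p : (2 : ZMod p) ≠ 0) (g : GL2 p) (hg : g ∈ Nspl p) :
    ((g : Mat) 0 1 = 0 ∧ (g : Mat) 1 0 = 0) ∨ ((g : Mat) 0 0 = 0 ∧ (g : Mat) 1 1 = 0) := by
  have hdet := entries_det g
  rw [Nspl, Subgroup.mem_normalizer_iff] at hg
  have hprod : (!![(1 : ZMod p), 0; 0, -1] * !![(1 : ZMod p), 0; 0, -1]) = 1 := by
    rw [Matrix.mul_fin_two]
    norm_num [← Matrix.one_fin_two]
  set h : GL2 p := mk2 !![(1 : ZMod p), 0; 0, -1] !![(1 : ZMod p), 0; 0, -1] hprod hprod with hh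
  have hmem : h ∈ Cs p := by
    rw [mem_Cs_iff]
    constructor <;> simp [hh]
  have hkey := (hg h).mp hmem
  rw [mem_Cs_iff] at hkey
  obtain ⟨k1, k2⟩ := hkey
  have e1 : ((g * h * g⁻¹ : GL2 p) : Mat) 0 1 =
      ((g : Mat) 0 0 * (g : Mat) 1 1 - (g : Mat) 0 1 * (g : Mat) 1 0)⁻¹ *
        (-(2 * ((g : Mat) 0 0 * (g : Mat) 0 1))) := by
    simp [hh, Units.val_mul, Matrix.coe_units_inv, Matrix.inv_def, Matrix.adjugate_fin_two,
      Matrix.det_fin_two, Matrix.mul_apply, Fin.sum_univ_two, Ring.inverse_eq_inv']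
    ring
  have e2 : ((g * h * g⁻¹ : GL2 p) : Mat) 1 0 =
      ((g : Mat) 0 0 * (g : Mat) 1 1 - (g : Mat) 0 1 * (g : Mat) 1 0)⁻¹ *
        (2 * ((g : Mat) 1 0 * (g : Mat) 1 1)) := by
    simp [hh, Units.val_mul, Matrix.coe_units_inv, Matrix.inv_def, Matrix.adjugate_fin_two,
      Matrix.det_fin_two, Matrix.mul_apply, Fin.sum_univ_two, Ring.inverse_eq_inv']
    ring
  rw [e1] at k1
  rw [e2] at k2
  have hinv : ((g : Mat) 0 0 * (g : Mat) 1 1 - (g : Mat) 0 1 * (g : Mat) 1 0)⁻¹ ≠ 0 :=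
    inv_ne_zero hdet
  have hab : (g : Mat) 0 0 * (g : Mat) 0 1 = 0 := by
    rcases mul_eq_zero.mp k1 with hu | hu
    · exact absurd hu hinv
    rcases mul_eq_zero.mp (neg_eq_zero.mp hu) with hu | hu
    · exact absurd hu h2p
    · exact hu
  have hcd : (g : Mat) 1 0 * (g : Mat) 1 1 = 0 := by
    rcases mul_eq_zero.mp k2 with hu | hu
    · exact absurd hu hinv
    rcases mul_eq_zero.mp hu with hu | hu
    · exact absurd hu h2p
    · exact hu
  rcases mul_eq_zero.mp hab with ha | hb
  · -- a = 0, so bc ≠ 0, so c ≠ 0, so d = 0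
    right
    refine ⟨ha, ?_⟩
    rw [ha] at hdet
    have hc : (g : Mat) 1 0 ≠ 0 := fun h => by simp [h] at hdet
    rcases mul_eq_zero.mp hcd with h' | h'
    · exact absurd h' hc
    · exact h'
  · -- b = 0, so ad ≠ 0, so d ≠ 0, so c = 0
    left
    refine ⟨hb, ?_⟩
    rw [hb] at hdet
    have hd : (g : Mat) 1 1 ≠ 0 := fun h => by simp [h] at hdet
    rcases mul_eq_zero.mp hcd with h' | h'
    · exact h'
    · exact absurd h' hd

end Chen
namespace Chen

variable {p : ℕ} [Fact p.Prime]

local notation "Mat" => Matrix (Fin 2) (Fin 2) (ZMod p)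

lemma diag_unit_eqs {x y : ZMod p} (hx : x ≠ 0) (hy : y ≠ 0) :
    (!![x, 0; 0, y] * !![x⁻¹, 0; 0, y⁻¹] : Mat) = 1 ∧
    (!![x⁻¹, 0; 0, y⁻¹] * !![x, 0; 0, y] : Mat) = 1 := by
  constructor <;>
  · ext i j
    fin_cases i <;> fin_cases j <;>
      simp [Matrix.mul_apply, Fin.sum_univ_two, Matrix.one_apply] <;> field_simp

def diagU (x y : ZMod p) (hx : x ≠ 0) (hy : y ≠ 0) : GL2 p :=
  mk2 !![x, 0; 0, y] !![x⁻¹, 0; 0, y⁻¹] (diag_unit_eqs hx hy).1 (diag_unit_eqs hx hy).2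

@[simp] lemma diagU_val (x y : ZMod p) (hx : x ≠ 0) (hy : y ≠ 0) :
    ((diagU x y hx hy : GL2 p) : Mat) = !![x, 0; 0, y] := rfl

lemma adiag_unit_eqs {x y : ZMod p} (hx : x ≠ 0) (hy : y ≠ 0) :
    (!![0, x; y, 0] * !![0, y⁻¹; x⁻¹, 0] : Mat) = 1 ∧
    (!![0, y⁻¹; x⁻¹, 0] * !![0, x; y, 0] : Mat) = 1 := by
  constructor <;>
  · ext i j
    fin_cases i <;> fin_cases j <;>
      simp [Matrix.mul_apply, Fin.sum_univ_two, Matrix.one_apply] <;> field_simp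

def adiagU (x y : ZMod p) (hx : x ≠ 0) (hy : y ≠ 0) : GL2 p :=
  mk2 !![0, x; y, 0] !![0, y⁻¹; x⁻¹, 0] (adiag_unit_eqs hx hy).1 (adiag_unit_eqs hx hy).2

@[simp] lemma adiagU_val (x y : ZMod p) (hx : x ≠ 0) (hy : y ≠ 0) :
    ((adiagU x y hx hy : GL2 p) : Mat) = !![0, x; y, 0] := rfl

lemma diagU_mem (x y : ZMod p) (hx : x ≠ 0) (hy : y ≠ 0) : diagU x y hx hy ∈ Nspl p := by
  apply diag_mem_Nspl <;> simp

lemma adiagU_mem (x y : ZMod p) (hx : x ≠ 0) (hy : y ≠ 0) : adiagU x y hx hy ∈ Nspl p := by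
  apply adiag_mem_Nspl <;> simp

lemma sig_unit_eqs {t : ZMod p} (ht : t ≠ 1) :
    (!![1, 1; 1, t] * ((t - 1)⁻¹ • !![t, -1; -1, 1]) : Mat) = 1 ∧
    (((t - 1)⁻¹ • !![t, -1; -1, 1]) * !![1, 1; 1, t] : Mat) = 1 := by
  have h : t - 1 ≠ 0 := sub_ne_zero.mpr ht
  constructor
  · rw [Matrix.mul_smul, Matrix.mul_fin_two]
    ext i j
    fin_cases i <;> fin_cases j <;>
      simp [Matrix.one_apply] <;> field_simp <;> ring
  · rw [Matrix.smul_mul, Matrix.mul_fin_two]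
    ext i j
    fin_cases i <;> fin_cases j <;>
      simp [Matrix.one_apply] <;> field_simp <;> ring

def sigU (t : ZMod p) (ht : t ≠ 1) : GL2 p :=
  mk2 !![1, 1; 1, t] ((t - 1)⁻¹ • !![t, -1; -1, 1]) (sig_unit_eqs ht).1 (sig_unit_eqs ht).2

@[simp] lemma sigU_val (t : ZMod p) (ht : t ≠ 1) :
    ((sigU t ht : GL2 p) : Mat) = !![1, 1; 1, t] := rfl

lemma doset_sub {t t' : ZMod p} (A B : GL2 p) (hA : A ∈ Nspl p) (hB : B ∈ Nspl p)
    (h : !![1, 1; 1, t'] = (A : Mat) * !![1, 1; 1, t] * (B : Mat)) :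
    dosetN p t' ⊆ dosetN p t := by
  intro g hg
  rw [mem_dosetN_iff] at hg ⊢
  obtain ⟨C, hC, D, hD, hg⟩ := hg
  refine ⟨C * A, mul_mem hC hA, B * D, mul_mem hB hD, ?_⟩
  rw [hg, h]
  simp only [Units.val_mul]
  noncomm_ring

end Chen
namespace Chen

variable {p : ℕ} [Fact p.Prime]

local notation "Mat" => Matrix (Fin 2) (Fin 2) (ZMod p)

lemma part1 (g : GL2 p) : g ∈ Nspl p ∨ ∃ t : ZMod p, t ≠ 1 ∧ g ∈ dosetN p t := by
  have hdet := entries_det g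
  by_cases hb0 : (g : Mat) 0 1 = 0 <;> by_cases hc0 : (g : Mat) 1 0 = 0
  · exact Or.inl (diag_mem_Nspl g hb0 hc0)
  · -- b = 0, c ≠ 0
    rw [hb0] at hdet
    have ha : (g : Mat) 0 0 ≠ 0 := fun h => by simp [h] at hdet
    have hd : (g : Mat) 1 1 ≠ 0 := fun h => by simp [h] at hdet
    refine Or.inr ⟨0, zero_ne_one, (mem_dosetN_iff _ _).mpr
      ⟨adiagU ((g : Mat) 0 0) ((g : Mat) 1 0) ha hc0, adiagU_mem _ _ _ _,
       diagU 1 ((g : Mat) 1 1 * ((g : Mat) 1 0)⁻¹) one_ne_zero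
         (mul_ne_zero hd (inv_ne_zero hc0)), diagU_mem _ _ _ _, ?_⟩⟩
    ext i j
    fin_cases i <;> fin_cases j <;>
      simp [Matrix.mul_apply, Fin.sum_univ_two, hb0] <;> field_simp
  · -- c = 0, b ≠ 0
    rw [hc0] at hdet
    have ha : (g : Mat) 0 0 ≠ 0 := fun h => by simp [h] at hdet
    have hd : (g : Mat) 1 1 ≠ 0 := fun h => by simp [h] at hdet
    refine Or.inr ⟨0, zero_ne_one, (mem_dosetN_iff _ _).mpr
      ⟨diagU 1 ((g : Mat) 1 1 * ((g : Mat) 0 1)⁻¹) one_ne_zero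
         (mul_ne_zero hd (inv_ne_zero hb0)), diagU_mem _ _ _ _,
       adiagU ((g : Mat) 0 1) ((g : Mat) 0 0) hb0 ha, adiagU_mem _ _ _ _, ?_⟩⟩
    ext i j
    fin_cases i <;> fin_cases j <;>
      simp [Matrix.mul_apply, Fin.sum_univ_two, hc0] <;> field_simp
  · -- b ≠ 0, c ≠ 0
    by_cases ha0 : (g : Mat) 0 0 = 0
    · by_cases hd0 : (g : Mat) 1 1 = 0
      · exact Or.inl (adiag_mem_Nspl g ha0 hd0)
      · -- a = 0, d ≠ 0
        refine Or.inr ⟨0, zero_ne_one, (mem_dosetN_iff _ _).mpr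
          ⟨adiagU ((g : Mat) 0 1) ((g : Mat) 1 1) hb0 hd0, adiagU_mem _ _ _ _,
           adiagU 1 ((g : Mat) 1 0 * ((g : Mat) 1 1)⁻¹) one_ne_zero
             (mul_ne_zero hc0 (inv_ne_zero hd0)), adiagU_mem _ _ _ _, ?_⟩⟩
        ext i j
        fin_cases i <;> fin_cases j <;>
          simp [Matrix.mul_apply, Fin.sum_univ_two, ha0] <;> field_simp
    · -- a, b, c ≠ 0
      set a := (g : Mat) 0 0 with haa
      set b := (g : Mat) 0 1 with hbb
      set c := (g : Mat) 1 0 with hcc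
      set d := (g : Mat) 1 1 with hdd
      refine Or.inr ⟨a * d * (b * c)⁻¹, ?_, (mem_dosetN_iff _ _).mpr
        ⟨diagU 1 (c * a⁻¹) one_ne_zero (mul_ne_zero hc0 (inv_ne_zero ha0)), diagU_mem _ _ _ _,
         diagU a b ha0 hb0, diagU_mem _ _ _ _, ?_⟩⟩
      · intro h1
        apply hdet
        have hbc : b * c ≠ 0 := mul_ne_zero hb0 hc0
        field_simp at h1
        linear_combination h1
      · ext i j
        fin_cases i <;> fin_cases j <;>
          simp [Matrix.mul_apply, Fin.sum_univ_two] <;> simp only [← haa, ← hbb, ← hcc, ← hdd] <;>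
          field_simp <;> ring

end Chen
namespace Chen

variable {p : ℕ} [Fact p.Prime]

local notation "Mat" => Matrix (Fin 2) (Fin 2) (ZMod p)

lemma part2fwd (h2p : (2 : ZMod p) ≠ 0) {t t' : ZMod p} (ht : t ≠ 1) (ht' : t' ≠ 1)
    (h : dosetN p t = dosetN p t') : t' = t ∨ (t ≠ 0 ∧ t' = t⁻¹) := by
  have hmem : sigU t' ht' ∈ dosetN p t' :=
    (mem_dosetN_iff _ _).mpr ⟨1, one_mem _, 1, one_mem _, by simp⟩
  rw [← h, mem_dosetN_iff] at hmem
  obtain ⟨A, hA, B, hB, hE⟩ := hmem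
  rw [sigU_val] at hE
  have E00 := congrFun (congrFun hE 0) 0
  have E01 := congrFun (congrFun hE 0) 1
  have E10 := congrFun (congrFun hE 1) 0
  have E11 := congrFun (congrFun hE 1) 1
  rcases Nspl_shape h2p A hA with ⟨hA1, hA2⟩ | ⟨hA1, hA2⟩ <;>
    rcases Nspl_shape h2p B hB with ⟨hB1, hB2⟩ | ⟨hB1, hB2⟩ <;>
    simp [Matrix.mul_apply, Fin.sum_univ_two, hA1, hA2, hB1, hB2] at E00 E01 E10 E11
  · -- A diag, B diag : t' = t
    left
    have ha : (A : Mat) 0 0 ≠ 0 := left_ne_zero_of_mul_eq_one E00.symm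
    have he : (B : Mat) 0 0 = (B : Mat) 1 1 := mul_left_cancel₀ ha (E00.symm.trans E01)
    linear_combination E11 - t * E10 - (A : Mat) 1 1 * t * he
  · -- A diag, B adiag : t' = t⁻¹
    right
    have ht0 : t ≠ 0 := by
      intro h0
      rw [h0] at E10
      simp at E10
    have hgf : (B : Mat) 1 0 = (B : Mat) 0 1 :=
      mul_left_cancel₀ (left_ne_zero_of_mul_eq_one E00.symm) (E00.symm.trans E01)
    have key : t * t' = 1 := by
      linear_combination t * E11 - E10 - (A : Mat) 1 1 * t * hgf
    exact ⟨ht0, eq_inv_of_mul_eq_one_right key⟩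
  · -- A adiag, B diag : t' = t⁻¹
    right
    have ht0 : t ≠ 0 := by
      intro h0
      rw [h0] at E01
      simp at E01
    have he : (B : Mat) 0 0 ≠ 0 := right_ne_zero_of_mul_eq_one E00.symm
    have hbc : (A : Mat) 0 1 = (A : Mat) 1 0 :=
      mul_right_cancel₀ he (E00.symm.trans E10)
    have key : t * t' = 1 := by
      linear_combination t * E11 - E01 - t * (B : Mat) 1 1 * hbc
    exact ⟨ht0, eq_inv_of_mul_eq_one_right key⟩
  · -- A adiag, B adiag : t' = t
    left
    have hb : (A : Mat) 0 1 ≠ 0 := left_ne_zero_of_mul_eq_one E01.symm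
    have hg : (B : Mat) 1 0 ≠ 0 := right_ne_zero_of_mul_eq_one E10.symm
    have key : t' * ((A : Mat) 0 1 * (B : Mat) 1 0) = t * ((A : Mat) 0 1 * (B : Mat) 1 0) := by
      linear_combination ((A : Mat) 0 1 * (B : Mat) 1 0) * E11 -
        ((A : Mat) 1 0 * (B : Mat) 1 0) * E01 + E00 - E10
    exact mul_right_cancel₀ (mul_ne_zero hb hg) key

end Chen
namespace Chen

variable {p : ℕ} [Fact p.Prime]

local notation "Mat" => Matrix (Fin 2) (Fin 2) (ZMod p)

lemma part2bwd {t : ZMod p} (ht0 : t ≠ 0) : dosetN p t = dosetN p t⁻¹ := by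
  have key : ∀ s : ZMod p, s ≠ 0 → dosetN p s⁻¹ ⊆ dosetN p s := by
    intro s hs
    refine doset_sub (diagU 1 s⁻¹ one_ne_zero (inv_ne_zero hs))
      (adiagU 1 1 one_ne_zero one_ne_zero) (diagU_mem _ _ _ _) (adiagU_mem _ _ _ _) ?_
    ext i j
    fin_cases i <;> fin_cases j <;>
      simp [Matrix.mul_apply, Fin.sum_univ_two] <;> field_simp
  apply Set.Subset.antisymm
  · have h := key t⁻¹ (inv_ne_zero ht0)
    rwa [inv_inv] at h
  · exact key t ht0

end Chen


open Chen in
/-- **Proposition 7.1.** Every element of `G = GL₂(𝔽_p)` lies in `N` or in a double coset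
`N σ_t N` with `σ_t = [[1,1],[1,t]]`, `t ∈ 𝔽_p ∖ {1}`, and `N σ_t N = N σ_{t'} N` iff
`t' = t` or (`t ≠ 0` and `t' = t⁻¹`). -/
theorem doset_decomposition (p : ℕ) [Fact p.Prime] (hodd : Odd p) :
    (∀ g : GL2 p, g ∈ Nspl p ∨ ∃ t : ZMod p, t ≠ 1 ∧ g ∈ dosetN p t) ∧
    (∀ t t' : ZMod p, t ≠ 1 → t' ≠ 1 →
      (dosetN p t = dosetN p t' ↔ t' = t ∨ (t ≠ 0 ∧ t' = t⁻¹))) := by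
  have hp2 : p ≠ 2 := by
    rintro rfl
    revert hodd
    decide
  have : NeZero p := ⟨(Fact.out : p.Prime).ne_zero⟩
  have h2p : (2 : ZMod p) ≠ 0 := by
    have h : ((2 : ℕ) : ZMod p) ≠ 0 := by
      rw [Ne, ZMod.natCast_eq_zero_iff]
      intro hdvd
      exact hp2 ((Nat.prime_dvd_prime_iff_eq (Fact.out : p.Prime) Nat.prime_two).mp hdvd)
    simpa using h
  refine ⟨fun g => part1 g, fun t t' ht ht' => ⟨part2fwd h2p ht ht', ?_⟩⟩
  rintro (rfl | ⟨ht0, rfl⟩)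
  · rfl
  · exact part2bwd ht0
end
end

section
/- Let p be an odd prime, G = GL₂(𝔽_p), N the normalizer of the diagonal torus, and σ_t = [[1,1],[1,t]] for t ∈ 𝔽_p ∖ {1}. Then the degrees of the N-double cosets are: deg(N) = 1, deg(Nσ₀N) = 2(p−1), deg(Nσ_{−1}N) = (p−1)/2, and deg(Nσ_tN) = p−1 for t ∉ {−1,0,1}, where deg(NgN) = [N : N ∩ gNg⁻¹]. -/
open Matrix Pointwise
open scoped Classical

noncomputable section

namespace ChenAux
open Chen
variable {p : ℕ} [Fact p.Prime]

lemma mem_Cs (g : GL2 p) : g ∈ Cs p ↔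
    (g : Matrix (Fin 2) (Fin 2) (ZMod p)) 0 1 = 0 ∧ (g : Matrix (Fin 2) (Fin 2) (ZMod p)) 1 0 = 0 :=
  Iff.rfl

lemma gdet_ne (g : GL2 p) : ((g : Matrix (Fin 2) (Fin 2) (ZMod p))).det ≠ 0 :=
  (Matrix.isUnits_det_units g).ne_zero

lemma inv_coe (g : GL2 p) :
    ((g⁻¹ : GL2 p) : Matrix (Fin 2) (Fin 2) (ZMod p)) =
      ((g : Matrix (Fin 2) (Fin 2) (ZMod p)).det)⁻¹ •
        !![(g : Matrix (Fin 2) (Fin 2) (ZMod p)) 1 1, -(g : Matrix (Fin 2) (Fin 2) (ZMod p)) 0 1;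
           -(g : Matrix (Fin 2) (Fin 2) (ZMod p)) 1 0, (g : Matrix (Fin 2) (Fin 2) (ZMod p)) 0 0] := by
  rw [Matrix.coe_units_inv, Matrix.inv_def, Matrix.adjugate_fin_two, Ring.inverse_eq_inv']

lemma conj_mem (g : GL2 p)
    (hg : ((g : Matrix (Fin 2) (Fin 2) (ZMod p)) 0 1 = 0 ∧ (g : Matrix (Fin 2) (Fin 2) (ZMod p)) 1 0 = 0)
        ∨ ((g : Matrix (Fin 2) (Fin 2) (ZMod p)) 0 0 = 0 ∧ (g : Matrix (Fin 2) (Fin 2) (ZMod p)) 1 1 = 0))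
    (x : GL2 p) (hx : x ∈ Cs p) : g * x * g⁻¹ ∈ Cs p := by
  obtain ⟨hx1, hx2⟩ := hx
  rw [mem_Cs]
  have e : ((g * x * g⁻¹ : GL2 p) : Matrix (Fin 2) (Fin 2) (ZMod p))
      = (g : Matrix (Fin 2) (Fin 2) (ZMod p)) * (x : Matrix (Fin 2) (Fin 2) (ZMod p)) *
        ((g⁻¹ : GL2 p) : Matrix (Fin 2) (Fin 2) (ZMod p)) := by
    simp [Units.val_mul]
  rw [e, inv_coe]
  rcases hg with ⟨h1, h2⟩ | ⟨h1, h2⟩ <;>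
  · constructor <;>
    · simp only [Matrix.mul_apply, Matrix.smul_apply, Fin.sum_univ_two, smul_eq_mul,
        Matrix.cons_val_zero, Matrix.cons_val_one, Matrix.head_cons, Matrix.head_fin_const,
        Matrix.cons_val', Matrix.empty_val', Matrix.cons_val_fin_one]
      rw [h1, h2, hx1, hx2]
      simp

lemma mem_Nspl_iff (hodd : Odd p) (g : GL2 p) :
    g ∈ Nspl p ↔
    ((g : Matrix (Fin 2) (Fin 2) (ZMod p)) 0 1 = 0 ∧ (g : Matrix (Fin 2) (Fin 2) (ZMod p)) 1 0 = 0)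
    ∨ ((g : Matrix (Fin 2) (Fin 2) (ZMod p)) 0 0 = 0 ∧ (g : Matrix (Fin 2) (Fin 2) (ZMod p)) 1 1 = 0) := by
  have two_ne : (2 : ZMod p) ≠ 0 := by
    intro h
    have h2 : ((2:ℕ) : ZMod p) = 0 := by exact_mod_cast h
    rw [ZMod.natCast_eq_zero_iff] at h2
    have := (Nat.prime_dvd_prime_iff_eq Fact.out Nat.prime_two).mp h2
    rcases hodd with ⟨m, hm⟩; omega
  constructor
  · intro h
    set D : GL2 p := ⟨!![1,0;0,-1], !![1,0;0,-1],
      by rw [Matrix.mul_fin_two, Matrix.one_fin_two]; norm_num,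
      by rw [Matrix.mul_fin_two, Matrix.one_fin_two]; norm_num⟩ with hDdef
    have hD : D ∈ Cs p := by
      rw [mem_Cs]
      constructor <;> simp [hDdef]
    have hGD := (Subgroup.mem_normalizer_iff.mp h D).mp hD
    rw [mem_Cs] at hGD
    have e : ((g * D * g⁻¹ : GL2 p) : Matrix (Fin 2) (Fin 2) (ZMod p))
        = (g : Matrix (Fin 2) (Fin 2) (ZMod p)) * !![1,0;0,-1] *
          ((g⁻¹ : GL2 p) : Matrix (Fin 2) (Fin 2) (ZMod p)) := by
      simp [Units.val_mul, hDdef]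
    rw [e, inv_coe] at hGD
    obtain ⟨e1, e2⟩ := hGD
    set a := (g : Matrix (Fin 2) (Fin 2) (ZMod p)) 0 0
    set b := (g : Matrix (Fin 2) (Fin 2) (ZMod p)) 0 1
    set c := (g : Matrix (Fin 2) (Fin 2) (ZMod p)) 1 0
    set d := (g : Matrix (Fin 2) (Fin 2) (ZMod p)) 1 1
    have hdet : a * d - b * c ≠ 0 := by
      have := gdet_ne g
      rwa [Matrix.det_fin_two] at this
    simp only [Matrix.mul_apply, Matrix.smul_apply, Fin.sum_univ_two, smul_eq_mul,
      Matrix.cons_val_zero, Matrix.cons_val_one, Matrix.head_cons, Matrix.of_apply,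
      Matrix.cons_val', Matrix.empty_val', Matrix.cons_val_fin_one, Matrix.head_fin_const,
      Matrix.det_fin_two] at e1 e2
    -- e1, e2 : polynomial in a b c d and inverse of det
    have hinv : (a * d - b * c)⁻¹ ≠ 0 := inv_ne_zero hdet
    have hab : a * b = 0 := by
      have : (a * d - b * c)⁻¹ * (-2 * (a * b)) = 0 := by rw [← e1]; ring
      rcases mul_eq_zero.mp this with h' | h'
      · exact absurd h' hinv
      · rcases mul_eq_zero.mp h' with h'' | h''
        · exact absurd h'' (by simpa using two_ne)
        · exact h''
    have hcd : c * d = 0 := by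
      have : (a * d - b * c)⁻¹ * (2 * (c * d)) = 0 := by rw [← e2]; ring
      rcases mul_eq_zero.mp this with h' | h'
      · exact absurd h' hinv
      · rcases mul_eq_zero.mp h' with h'' | h''
        · exact absurd h'' two_ne
        · exact h''
    rcases mul_eq_zero.mp hab with ha | hb
    · rcases mul_eq_zero.mp hcd with hc | hd
      · exact absurd (by rw [ha, hc]; ring) hdet
      · exact Or.inr ⟨ha, hd⟩
    · rcases mul_eq_zero.mp hcd with hc | hd
      · exact Or.inl ⟨hb, hc⟩
      · exact absurd (by rw [hb, hd]; ring) hdet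
  · intro hg
    rw [Nspl, Subgroup.mem_normalizer_iff]
    intro x
    constructor
    · exact conj_mem g hg x
    · intro hx
      have hg' : ((g⁻¹ : GL2 p) : Matrix (Fin 2) (Fin 2) (ZMod p)) 0 1 = 0 ∧
          ((g⁻¹ : GL2 p) : Matrix (Fin 2) (Fin 2) (ZMod p)) 1 0 = 0 ∨
          ((g⁻¹ : GL2 p) : Matrix (Fin 2) (Fin 2) (ZMod p)) 0 0 = 0 ∧
          ((g⁻¹ : GL2 p) : Matrix (Fin 2) (Fin 2) (ZMod p)) 1 1 = 0 := by
        rw [inv_coe]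
        rcases hg with ⟨h1, h2⟩ | ⟨h1, h2⟩
        · exact Or.inl (by constructor <;> simp [h1, h2])
        · exact Or.inr (by constructor <;> simp [h1, h2])
      have := conj_mem g⁻¹ hg' _ hx
      simpa [mul_assoc] using this

def mkD (a d : (ZMod p)ˣ) : GL2 p :=
  ⟨!![(a : ZMod p), 0; 0, (d : ZMod p)],
   !![((a⁻¹ : (ZMod p)ˣ) : ZMod p), 0; 0, ((d⁻¹ : (ZMod p)ˣ) : ZMod p)],
   by rw [Matrix.mul_fin_two, Matrix.one_fin_two]
      simp only [mul_zero, zero_mul, add_zero, zero_add, Units.mul_inv],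
   by rw [Matrix.mul_fin_two, Matrix.one_fin_two]
      simp only [mul_zero, zero_mul, add_zero, zero_add, Units.inv_mul]⟩

def mkA (a d : (ZMod p)ˣ) : GL2 p :=
  ⟨!![0, (a : ZMod p); (d : ZMod p), 0],
   !![0, ((d⁻¹ : (ZMod p)ˣ) : ZMod p); ((a⁻¹ : (ZMod p)ˣ) : ZMod p), 0],
   by rw [Matrix.mul_fin_two, Matrix.one_fin_two]
      simp only [mul_zero, zero_mul, add_zero, zero_add, Units.mul_inv],
   by rw [Matrix.mul_fin_two, Matrix.one_fin_two]
      simp only [mul_zero, zero_mul, add_zero, zero_add, Units.inv_mul]⟩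

@[simp] lemma mkD_coe (a d : (ZMod p)ˣ) :
    ((mkD a d : GL2 p) : Matrix (Fin 2) (Fin 2) (ZMod p)) = !![(a:ZMod p), 0; 0, (d:ZMod p)] := rfl
@[simp] lemma mkA_coe (a d : (ZMod p)ˣ) :
    ((mkA a d : GL2 p) : Matrix (Fin 2) (Fin 2) (ZMod p)) = !![0, (a:ZMod p); (d:ZMod p), 0] := rfl

lemma mkD_mem (hodd : Odd p) (a d : (ZMod p)ˣ) : mkD a d ∈ Nspl p :=
  (mem_Nspl_iff hodd _).mpr (Or.inl (by simp))
lemma mkA_mem (hodd : Odd p) (a d : (ZMod p)ˣ) : mkA a d ∈ Nspl p :=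
  (mem_Nspl_iff hodd _).mpr (Or.inr (by simp))

def eN (hodd : Odd p) : (ZMod p)ˣ × (ZMod p)ˣ × Bool → (Nspl p) := fun x =>
  if x.2.2 then ⟨mkA x.1 x.2.1, mkA_mem hodd _ _⟩ else ⟨mkD x.1 x.2.1, mkD_mem hodd _ _⟩

lemma eN_bij (hodd : Odd p) : Function.Bijective (eN (p := p) hodd) := by
  constructor
  · rintro ⟨a1, d1, s1⟩ ⟨a2, d2, s2⟩ h
    have hm := Subtype.ext_iff.mp h
    cases s1 <;> cases s2 <;>
      simp only [eN, Bool.false_eq_true, if_false, if_true] at hm <;>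
      have hmm := Units.ext_iff.mp hm
    · have h00 := congrFun (congrFun hmm 0) 0
      have h11 := congrFun (congrFun hmm 1) 1
      simp only [mkD_coe, Matrix.of_apply, Matrix.cons_val_zero, Matrix.cons_val_one,
        Matrix.head_cons, Matrix.cons_val', Matrix.empty_val', Matrix.cons_val_fin_one,
        Matrix.head_fin_const] at h00 h11
      simp [Prod.ext_iff, Units.ext_iff, h00, h11]
    · have h00 := congrFun (congrFun hmm 0) 0
      simp at h00
    · have h00 := congrFun (congrFun hmm 0) 0
      simp at h00
      exact absurd h00.symm (Units.ne_zero a2)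
    · have h01 := congrFun (congrFun hmm 0) 1
      have h10 := congrFun (congrFun hmm 1) 0
      simp only [mkA_coe, Matrix.of_apply, Matrix.cons_val_zero, Matrix.cons_val_one,
        Matrix.head_cons, Matrix.cons_val', Matrix.empty_val', Matrix.cons_val_fin_one,
        Matrix.head_fin_const] at h01 h10
      simp [Prod.ext_iff, Units.ext_iff, h01, h10]
  · rintro ⟨g, hg⟩
    have hdet := gdet_ne g
    rw [Matrix.det_fin_two] at hdet
    rcases (mem_Nspl_iff hodd g).mp hg with ⟨h1, h2⟩ | ⟨h1, h2⟩
    · have ha : (g : Matrix (Fin 2) (Fin 2) (ZMod p)) 0 0 ≠ 0 := fun h => hdet (by rw [h, h1]; ring)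
      have hd : (g : Matrix (Fin 2) (Fin 2) (ZMod p)) 1 1 ≠ 0 := fun h => hdet (by rw [h, h1]; ring)
      refine ⟨(Units.mk0 _ ha, Units.mk0 _ hd, false), ?_⟩
      apply Subtype.ext
      apply Units.ext
      simp only [eN, Bool.false_eq_true, if_false, mkD_coe, Units.val_mk0]
      rw [Matrix.eta_fin_two (g : Matrix (Fin 2) (Fin 2) (ZMod p)), h1, h2]
      simp
    · have hb : (g : Matrix (Fin 2) (Fin 2) (ZMod p)) 0 1 ≠ 0 := fun h => hdet (by rw [h, h1]; ring)
      have hc : (g : Matrix (Fin 2) (Fin 2) (ZMod p)) 1 0 ≠ 0 := fun h => hdet (by rw [h, h1]; ring)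
      refine ⟨(Units.mk0 _ hb, Units.mk0 _ hc, true), ?_⟩
      apply Subtype.ext
      apply Units.ext
      simp only [eN, if_true, mkA_coe, Units.val_mk0]
      rw [Matrix.eta_fin_two (g : Matrix (Fin 2) (Fin 2) (ZMod p)), h1, h2]
      simp

lemma card_Nspl (hodd : Odd p) : Nat.card (Nspl p) = (p - 1) * (p - 1) * 2 := by
  rw [← Nat.card_congr (Equiv.ofBijective _ (eN_bij (p := p) hodd))]
  simp [Nat.card_eq_fintype_card, ZMod.card_units_eq_totient, Nat.totient_prime (Fact.out), mul_assoc]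

lemma mem_conjmap_iff (σ x : GL2 p) :
    x ∈ Subgroup.map (MulAut.conj σ).toMonoidHom (Nspl p) ↔ σ⁻¹ * x * σ ∈ Nspl p := by
  rw [Subgroup.mem_map_equiv]
  simp [MulAut.conj, mul_assoc]

lemma conj_coe (σ x : GL2 p) (t : ZMod p)
    (hσ : (σ : Matrix (Fin 2) (Fin 2) (ZMod p)) = !![1,1;1,t]) :
    ((σ⁻¹ * x * σ : GL2 p) : Matrix (Fin 2) (Fin 2) (ZMod p)) =
      (t - 1)⁻¹ • (!![t,-1;-1,1] * (x : Matrix (Fin 2) (Fin 2) (ZMod p)) * !![1,1;1,t]) := by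
  have h1 : ((σ⁻¹ : GL2 p) : Matrix (Fin 2) (Fin 2) (ZMod p)) = (t-1)⁻¹ • !![t,-1;-1,1] := by
    rw [inv_coe, hσ]
    norm_num [Matrix.det_fin_two]
  rw [Units.val_mul, Units.val_mul, h1, hσ, Matrix.smul_mul, Matrix.smul_mul]

lemma det_t (σ : GL2 p) (t : ZMod p)
    (hσ : (σ : Matrix (Fin 2) (Fin 2) (ZMod p)) = !![1,1;1,t]) : t - 1 ≠ 0 := by
  have := gdet_ne σ
  rw [hσ, Matrix.det_fin_two] at this
  intro h; apply this; simp; linear_combination h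

lemma mem_inter_iff (hodd : Odd p) (σ x : GL2 p) (t : ZMod p)
    (hσ : (σ : Matrix (Fin 2) (Fin 2) (ZMod p)) = !![1,1;1,t]) :
    x ∈ Subgroup.map (MulAut.conj σ).toMonoidHom (Nspl p) ⊓ Nspl p ↔
    (((x : Matrix (Fin 2) (Fin 2) (ZMod p)) 0 1 = 0 ∧ (x : Matrix (Fin 2) (Fin 2) (ZMod p)) 1 0 = 0) ∧
      ((x : Matrix (Fin 2) (Fin 2) (ZMod p)) 0 0 = (x : Matrix (Fin 2) (Fin 2) (ZMod p)) 1 1 ∨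
       (t * t = 1 ∧ (x : Matrix (Fin 2) (Fin 2) (ZMod p)) 1 1 = t * (x : Matrix (Fin 2) (Fin 2) (ZMod p)) 0 0))) ∨
    (((x : Matrix (Fin 2) (Fin 2) (ZMod p)) 0 0 = 0 ∧ (x : Matrix (Fin 2) (Fin 2) (ZMod p)) 1 1 = 0) ∧
      ((x : Matrix (Fin 2) (Fin 2) (ZMod p)) 1 0 = t * (x : Matrix (Fin 2) (Fin 2) (ZMod p)) 0 1 ∨
       (t * t = 1 ∧ (x : Matrix (Fin 2) (Fin 2) (ZMod p)) 1 0 = (x : Matrix (Fin 2) (Fin 2) (ZMod p)) 0 1))) := by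
  have hk : (t - 1)⁻¹ ≠ 0 := inv_ne_zero (det_t σ t hσ)
  have hdet := gdet_ne x
  rw [Matrix.det_fin_two] at hdet
  set a := (x : Matrix (Fin 2) (Fin 2) (ZMod p)) 0 0 with ha'
  set b := (x : Matrix (Fin 2) (Fin 2) (ZMod p)) 0 1 with hb'
  set c := (x : Matrix (Fin 2) (Fin 2) (ZMod p)) 1 0 with hc'
  set d := (x : Matrix (Fin 2) (Fin 2) (ZMod p)) 1 1 with hd'
  rw [Subgroup.mem_inf, mem_conjmap_iff, mem_Nspl_iff hodd, mem_Nspl_iff hodd,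
    conj_coe σ x t hσ]
  rw [Matrix.eta_fin_two (x : Matrix (Fin 2) (Fin 2) (ZMod p)), ← ha', ← hb', ← hc', ← hd']
  rw [Matrix.mul_fin_two, Matrix.mul_fin_two]
  have keq : ∀ u : ZMod p, ((t-1)⁻¹ • u = 0) ↔ u = 0 := fun u => by
    rw [smul_eq_mul, mul_eq_zero]
    exact ⟨fun h => h.resolve_left hk, Or.inr⟩
  simp only [Matrix.smul_apply, Matrix.of_apply, Matrix.cons_val_zero, Matrix.cons_val_one,
    Matrix.head_cons, Matrix.cons_val', Matrix.empty_val', Matrix.cons_val_fin_one,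
    Matrix.head_fin_const, keq]
  constructor
  · rintro ⟨hconj, hN⟩
    rcases hN with ⟨hb0, hc0⟩ | ⟨ha0, hd0⟩
    · refine Or.inl ⟨⟨hb0, hc0⟩, ?_⟩
      have hane : a ≠ 0 := fun h => hdet (by rw [h, hb0]; ring)
      rcases hconj with ⟨e1, e2⟩ | ⟨e1, e2⟩
      · left; linear_combination -e2 + hc0 - hb0
      · right
        have h1 : d = t * a := by linear_combination -e1 - hc0 + t * hb0
        have h2 : a = t * d := by linear_combination -e2 + hc0 - t * hb0
        have h3 : a * (t * t - 1) = 0 := by linear_combination -h2 - t * h1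
        rcases mul_eq_zero.mp h3 with h4 | h4
        · exact absurd h4 hane
        · exact ⟨by linear_combination h4, h1⟩
    · refine Or.inr ⟨⟨ha0, hd0⟩, ?_⟩
      have hbne : b ≠ 0 := fun h => hdet (by rw [h, ha0]; ring)
      rcases hconj with ⟨e1, e2⟩ | ⟨e1, e2⟩
      · right
        have hcb : c = b := by linear_combination e2 + ha0 - hd0
        have h3 : b * (t * t - 1) = 0 := by
          linear_combination e1 - t * ha0 + t * hd0 + hcb
        rcases mul_eq_zero.mp h3 with h4 | h4
        · exact absurd h4 hbne
        · exact ⟨by linear_combination h4, hcb⟩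
      · left; linear_combination -e1 + t * ha0 - hd0
  · rintro (⟨⟨hb0, hc0⟩, had | ⟨htt, hdta⟩⟩ | ⟨⟨ha0, hd0⟩, hctb | ⟨htt, hcb⟩⟩)
    · exact ⟨Or.inl ⟨by linear_combination t * had - hc0 + t * t * hb0,
        by linear_combination -had + hc0 - hb0⟩, Or.inl ⟨hb0, hc0⟩⟩
    · exact ⟨Or.inr ⟨by linear_combination -hdta - hc0 + t * hb0,
        by linear_combination t * hdta + a * htt + hc0 - t * hb0⟩, Or.inl ⟨hb0, hc0⟩⟩
    · exact ⟨Or.inr ⟨by linear_combination -hctb + t * ha0 - hd0,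
        by linear_combination hctb - ha0 + t * hd0⟩, Or.inr ⟨ha0, hd0⟩⟩
    · exact ⟨Or.inl ⟨by linear_combination -hcb + b * htt + t * ha0 - t * hd0,
        by linear_combination hcb - ha0 + hd0⟩, Or.inr ⟨ha0, hd0⟩⟩

section cards

abbrev Hint (σ : GL2 p) : Subgroup (GL2 p) :=
  Subgroup.map (MulAut.conj σ).toMonoidHom (Nspl p) ⊓ Nspl p

lemma mkD_mem_inter (hodd : Odd p) (σ : GL2 p) (t : ZMod p) (hσ : (σ : Matrix (Fin 2) (Fin 2) (ZMod p)) = !![1,1;1,t]) (u : (ZMod p)ˣ) :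
    mkD u u ∈ Hint σ :=
  (mem_inter_iff hodd σ _ t hσ).mpr (Or.inl ⟨⟨by simp, by simp⟩, Or.inl (by simp)⟩)

lemma card_inter_zero (hodd : Odd p) (σ : GL2 p) (hσ : (σ : Matrix (Fin 2) (Fin 2) (ZMod p)) = !![1,1;1,(0:ZMod p)]) :
    Nat.card (Hint σ) = p - 1 := by
  have hbij : Function.Bijective
      (fun u : (ZMod p)ˣ => (⟨mkD u u, mkD_mem_inter hodd σ 0 hσ u⟩ : (Hint σ))) := by
    constructor
    · intro u v h
      simp only at h
      have hm := Units.ext_iff.mp (Subtype.ext_iff.mp h)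
      have h00 := congrFun (congrFun hm 0) 0
      simp at h00
      exact Units.ext h00
    · rintro ⟨x, hx⟩
      have hdet := gdet_ne x
      rw [Matrix.det_fin_two] at hdet
      rcases (mem_inter_iff hodd σ x 0 hσ).mp hx with ⟨⟨hb0, hc0⟩, had | ⟨htt, _⟩⟩ |
        ⟨⟨ha0, hd0⟩, hctb | ⟨htt, _⟩⟩
      · have ha : (x : Matrix (Fin 2) (Fin 2) (ZMod p)) 0 0 ≠ 0 :=
          fun h => hdet (by rw [h, hb0]; ring)
        refine ⟨Units.mk0 _ ha, ?_⟩
        simp only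
        apply Subtype.ext; apply Units.ext
        show (!![(x : Matrix (Fin 2) (Fin 2) (ZMod p)) 0 0, 0; 0,
          (x : Matrix (Fin 2) (Fin 2) (ZMod p)) 0 0] : Matrix (Fin 2) (Fin 2) (ZMod p)) =
          (x : Matrix (Fin 2) (Fin 2) (ZMod p))
        conv_rhs => rw [Matrix.eta_fin_two (x : Matrix (Fin 2) (Fin 2) (ZMod p)), hb0, hc0, ← had]
      · exact absurd (by simpa using htt.symm) (zero_ne_one (α := ZMod p))
      · exact absurd (show (x : Matrix (Fin 2) (Fin 2) (ZMod p)) 0 0 *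
            (x : Matrix (Fin 2) (Fin 2) (ZMod p)) 1 1 - (x : Matrix (Fin 2) (Fin 2) (ZMod p)) 0 1 *
            (x : Matrix (Fin 2) (Fin 2) (ZMod p)) 1 0 = 0 by rw [hctb, ha0]; ring) hdet
      · exact absurd (by simpa using htt.symm) (zero_ne_one (α := ZMod p))
  rw [← Nat.card_congr (Equiv.ofBijective _ hbij)]
  simp [Nat.card_eq_fintype_card, ZMod.card_units_eq_totient, Nat.totient_prime (Fact.out)]
end cards

lemma two_ne' (hodd : Odd p) : (2 : ZMod p) ≠ 0 := by
  intro h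
  have h2 : ((2:ℕ) : ZMod p) = 0 := by exact_mod_cast h
  rw [ZMod.natCast_eq_zero_iff] at h2
  have := (Nat.prime_dvd_prime_iff_eq Fact.out Nat.prime_two).mp h2
  rcases hodd with ⟨m, hm⟩; omega

lemma card_inter_gen (hodd : Odd p) (σ : GL2 p) (t : ZMod p)
    (hσ : (σ : Matrix (Fin 2) (Fin 2) (ZMod p)) = !![1,1;1,t]) (ht0 : t ≠ 0)
    (htt : t * t ≠ 1) :
    Nat.card (Hint σ) = 2 * (p - 1) := by
  have hAmem : ∀ u : (ZMod p)ˣ, mkA u (Units.mk0 t ht0 * u) ∈ Hint σ := fun u =>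
    (mem_inter_iff hodd σ _ t hσ).mpr (Or.inr ⟨⟨by simp, by simp⟩,
      Or.inl (by simp [Units.val_mul])⟩)
  have hbij : Function.Bijective
      (fun x : (ZMod p)ˣ × Bool => if x.2 then (⟨mkA x.1 (Units.mk0 t ht0 * x.1), hAmem x.1⟩ : (Hint σ))
        else ⟨mkD x.1 x.1, mkD_mem_inter hodd σ t hσ x.1⟩) := by
    constructor
    · rintro ⟨u, s1⟩ ⟨v, s2⟩ h
      cases s1 <;> cases s2 <;>
        simp only [Bool.false_eq_true, if_false, if_true] at h <;>
        have hm := Units.ext_iff.mp (Subtype.ext_iff.mp h)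
      · have h00 := congrFun (congrFun hm 0) 0
        simp at h00
        simp [Prod.ext_iff, Units.ext_iff, h00]
      · have h00 := congrFun (congrFun hm 0) 0
        simp at h00
      · have h00 := congrFun (congrFun hm 0) 0
        simp at h00
        exact absurd h00.symm (Units.ne_zero v)
      · have h01 := congrFun (congrFun hm 0) 1
        simp at h01
        simp [Prod.ext_iff, Units.ext_iff, h01]
    · rintro ⟨x, hx⟩
      have hdet := gdet_ne x
      rw [Matrix.det_fin_two] at hdet
      rcases (mem_inter_iff hodd σ x t hσ).mp hx with ⟨⟨hb0, hc0⟩, had | ⟨htt', _⟩⟩ |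
        ⟨⟨ha0, hd0⟩, hctb | ⟨htt', _⟩⟩
      · have ha : (x : Matrix (Fin 2) (Fin 2) (ZMod p)) 0 0 ≠ 0 :=
          fun h => hdet (by rw [h, hb0]; ring)
        refine ⟨(Units.mk0 _ ha, false), ?_⟩
        simp only [Bool.false_eq_true, if_false]
        apply Subtype.ext; apply Units.ext
        show (!![(x : Matrix (Fin 2) (Fin 2) (ZMod p)) 0 0, 0; 0,
          (x : Matrix (Fin 2) (Fin 2) (ZMod p)) 0 0] : Matrix (Fin 2) (Fin 2) (ZMod p)) =
          (x : Matrix (Fin 2) (Fin 2) (ZMod p))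
        conv_rhs => rw [Matrix.eta_fin_two (x : Matrix (Fin 2) (Fin 2) (ZMod p)), hb0, hc0, ← had]
      · exact absurd htt' htt
      · have hb : (x : Matrix (Fin 2) (Fin 2) (ZMod p)) 0 1 ≠ 0 :=
          fun h => hdet (by rw [h, ha0]; ring)
        refine ⟨(Units.mk0 _ hb, true), ?_⟩
        simp only [if_true]
        apply Subtype.ext; apply Units.ext
        show (!![0, (x : Matrix (Fin 2) (Fin 2) (ZMod p)) 0 1;
          ((Units.mk0 t ht0 * Units.mk0 _ hb : (ZMod p)ˣ) : ZMod p), 0] :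
            Matrix (Fin 2) (Fin 2) (ZMod p)) = (x : Matrix (Fin 2) (Fin 2) (ZMod p))
        rw [Units.val_mul]
        conv_rhs => rw [Matrix.eta_fin_two (x : Matrix (Fin 2) (Fin 2) (ZMod p)), ha0, hd0, hctb]
        rfl
      · exact absurd htt' htt
  rw [← Nat.card_congr (Equiv.ofBijective _ hbij)]
  simp [Nat.card_eq_fintype_card, ZMod.card_units_eq_totient, Nat.totient_prime (Fact.out), mul_comm]

lemma negv_ne_self (hodd : Odd p) (u : (ZMod p)ˣ) : -(u:ZMod p) ≠ (u:ZMod p) := by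
  intro h
  have h2 : (2:ZMod p) * u = 0 := by linear_combination -h
  rcases mul_eq_zero.mp h2 with h' | h'
  · exact two_ne' hodd h'
  · exact Units.ne_zero u h'

def sgu : Bool → (ZMod p)ˣ := fun s => if s then -1 else 1

lemma card_inter_neg (hodd : Odd p) (σ : GL2 p)
    (hσ : (σ : Matrix (Fin 2) (Fin 2) (ZMod p)) = !![1,1;1,(-1 : ZMod p)]) :
    Nat.card (Hint σ) = 4 * (p - 1) := by
  have hDmem : ∀ (u : (ZMod p)ˣ) (s : Bool), mkD u (sgu s * u) ∈ Hint σ := by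
    intro u s
    apply (mem_inter_iff hodd σ _ (-1) hσ).mpr
    cases s
    · exact Or.inl ⟨⟨by simp, by simp⟩, Or.inl (by simp [sgu])⟩
    · exact Or.inl ⟨⟨by simp, by simp⟩, Or.inr ⟨by ring, by simp [sgu, Units.val_mul]⟩⟩
  have hAmem : ∀ (u : (ZMod p)ˣ) (s : Bool), mkA u (sgu s * u) ∈ Hint σ := by
    intro u s
    apply (mem_inter_iff hodd σ _ (-1) hσ).mpr
    cases s
    · exact Or.inr ⟨⟨by simp, by simp⟩, Or.inr ⟨by ring, by simp [sgu]⟩⟩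
    · exact Or.inr ⟨⟨by simp, by simp⟩, Or.inl (by simp [sgu, Units.val_mul])⟩
  have hbij : Function.Bijective
      (fun x : (ZMod p)ˣ × Bool × Bool =>
        if x.2.1 then (⟨mkA x.1 (sgu x.2.2 * x.1), hAmem x.1 x.2.2⟩ : (Hint σ))
        else ⟨mkD x.1 (sgu x.2.2 * x.1), hDmem x.1 x.2.2⟩) := by
    constructor
    · rintro ⟨u, b1, s1⟩ ⟨v, b2, s2⟩ h
      cases b1 <;> cases b2 <;>
        simp only [Bool.false_eq_true, if_false, if_true] at h <;>
        have hm := Units.ext_iff.mp (Subtype.ext_iff.mp h)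
      · have h00 := congrFun (congrFun hm 0) 0
        have h11 := congrFun (congrFun hm 1) 1
        simp only [mkD_coe, Matrix.of_apply, Matrix.cons_val_zero, Matrix.cons_val_one,
          Matrix.head_cons, Matrix.cons_val', Matrix.empty_val', Matrix.cons_val_fin_one,
          Matrix.head_fin_const] at h00 h11
        cases s1 <;> cases s2 <;> simp only [sgu, if_true, Bool.false_eq_true, if_false,
          Units.val_mul, Units.val_one, Units.val_neg, one_mul, neg_mul] at h11
        · simp [Prod.ext_iff, Units.ext_iff, h00]
        · rw [h00] at h11
          exact absurd h11.symm (negv_ne_self hodd v)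
        · rw [← h00] at h11
          exact absurd h11 (negv_ne_self hodd u)
        · simp [Prod.ext_iff, Units.ext_iff, h00]
      · have h00 := congrFun (congrFun hm 0) 0
        simp at h00
      · have h00 := congrFun (congrFun hm 0) 0
        simp at h00
        exact absurd h00.symm (Units.ne_zero v)
      · have h01 := congrFun (congrFun hm 0) 1
        have h10 := congrFun (congrFun hm 1) 0
        simp only [mkA_coe, Matrix.of_apply, Matrix.cons_val_zero, Matrix.cons_val_one,
          Matrix.head_cons, Matrix.cons_val', Matrix.empty_val', Matrix.cons_val_fin_one,
          Matrix.head_fin_const] at h01 h10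
        cases s1 <;> cases s2 <;> simp only [sgu, if_true, Bool.false_eq_true, if_false,
          Units.val_mul, Units.val_one, Units.val_neg, one_mul, neg_mul] at h10
        · simp [Prod.ext_iff, Units.ext_iff, h01]
        · rw [h01] at h10
          exact absurd h10.symm (negv_ne_self hodd v)
        · rw [← h01] at h10
          exact absurd h10 (negv_ne_self hodd u)
        · simp [Prod.ext_iff, Units.ext_iff, h01]
    · rintro ⟨x, hx⟩
      have hdet := gdet_ne x
      rw [Matrix.det_fin_two] at hdet
      rcases (mem_inter_iff hodd σ x (-1) hσ).mp hx with ⟨⟨hb0, hc0⟩, had | ⟨_, hdta⟩⟩ |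
        ⟨⟨ha0, hd0⟩, hctb | ⟨_, hcb⟩⟩
      · have ha : (x : Matrix (Fin 2) (Fin 2) (ZMod p)) 0 0 ≠ 0 :=
          fun h => hdet (by rw [h, hb0]; ring)
        refine ⟨(Units.mk0 _ ha, false, false), ?_⟩
        simp only [Bool.false_eq_true, if_false]
        apply Subtype.ext; apply Units.ext
        show (!![(x : Matrix (Fin 2) (Fin 2) (ZMod p)) 0 0, 0; 0,
          ((sgu false * Units.mk0 _ ha : (ZMod p)ˣ) : ZMod p)] : Matrix (Fin 2) (Fin 2) (ZMod p)) =
          (x : Matrix (Fin 2) (Fin 2) (ZMod p))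
        have : ((sgu false * Units.mk0 _ ha : (ZMod p)ˣ) : ZMod p) =
            (x : Matrix (Fin 2) (Fin 2) (ZMod p)) 1 1 := by
          simp [sgu, Units.val_mul, ← had]
        rw [this]
        conv_rhs => rw [Matrix.eta_fin_two (x : Matrix (Fin 2) (Fin 2) (ZMod p)), hb0, hc0]
      · have ha : (x : Matrix (Fin 2) (Fin 2) (ZMod p)) 0 0 ≠ 0 :=
          fun h => hdet (by rw [h, hb0]; ring)
        refine ⟨(Units.mk0 _ ha, false, true), ?_⟩
        simp only [Bool.false_eq_true, if_false]
        apply Subtype.ext; apply Units.ext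
        show (!![(x : Matrix (Fin 2) (Fin 2) (ZMod p)) 0 0, 0; 0,
          ((sgu true * Units.mk0 _ ha : (ZMod p)ˣ) : ZMod p)] : Matrix (Fin 2) (Fin 2) (ZMod p)) =
          (x : Matrix (Fin 2) (Fin 2) (ZMod p))
        have : ((sgu true * Units.mk0 _ ha : (ZMod p)ˣ) : ZMod p) =
            (x : Matrix (Fin 2) (Fin 2) (ZMod p)) 1 1 := by
          simp only [sgu, if_true, Units.val_mul, Units.val_neg, Units.val_one, Units.val_mk0]
          linear_combination -hdta
        rw [this]
        conv_rhs => rw [Matrix.eta_fin_two (x : Matrix (Fin 2) (Fin 2) (ZMod p)), hb0, hc0]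
      · have hb : (x : Matrix (Fin 2) (Fin 2) (ZMod p)) 0 1 ≠ 0 :=
          fun h => hdet (by rw [h, ha0]; ring)
        refine ⟨(Units.mk0 _ hb, true, true), ?_⟩
        simp only [if_true]
        apply Subtype.ext; apply Units.ext
        show (!![0, (x : Matrix (Fin 2) (Fin 2) (ZMod p)) 0 1;
          ((sgu true * Units.mk0 _ hb : (ZMod p)ˣ) : ZMod p), 0] : Matrix (Fin 2) (Fin 2) (ZMod p)) =
          (x : Matrix (Fin 2) (Fin 2) (ZMod p))
        have : ((sgu true * Units.mk0 _ hb : (ZMod p)ˣ) : ZMod p) =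
            (x : Matrix (Fin 2) (Fin 2) (ZMod p)) 1 0 := by
          simp only [sgu, if_true, Units.val_mul, Units.val_neg, Units.val_one, Units.val_mk0]
          linear_combination -hctb
        rw [this]
        conv_rhs => rw [Matrix.eta_fin_two (x : Matrix (Fin 2) (Fin 2) (ZMod p)), ha0, hd0]
      · have hb : (x : Matrix (Fin 2) (Fin 2) (ZMod p)) 0 1 ≠ 0 :=
          fun h => hdet (by rw [h, ha0]; ring)
        refine ⟨(Units.mk0 _ hb, true, false), ?_⟩
        simp only [if_true]
        apply Subtype.ext; apply Units.ext
        show (!![0, (x : Matrix (Fin 2) (Fin 2) (ZMod p)) 0 1;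
          ((sgu false * Units.mk0 _ hb : (ZMod p)ˣ) : ZMod p), 0] : Matrix (Fin 2) (Fin 2) (ZMod p)) =
          (x : Matrix (Fin 2) (Fin 2) (ZMod p))
        have : ((sgu false * Units.mk0 _ hb : (ZMod p)ˣ) : ZMod p) =
            (x : Matrix (Fin 2) (Fin 2) (ZMod p)) 1 0 := by
          simp [sgu, Units.val_mul, ← hcb]
        rw [this]
        conv_rhs => rw [Matrix.eta_fin_two (x : Matrix (Fin 2) (Fin 2) (ZMod p)), ha0, hd0]
  rw [← Nat.card_congr (Equiv.ofBijective _ hbij)]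
  simp [Nat.card_eq_fintype_card, ZMod.card_units_eq_totient, Nat.totient_prime (Fact.out)]
  ring

lemma relindex_eq (hodd : Odd p) (σ : GL2 p) (m k : ℕ) (hm : 0 < m)
    (hH : Nat.card (Hint σ) = m) (hk : m * k = (p - 1) * (p - 1) * 2) :
    (Subgroup.map (MulAut.conj σ).toMonoidHom (Nspl p)).relIndex (Nspl p) = k := by
  rw [← Subgroup.inf_relIndex_right]
  have hle : (Hint σ) ≤ Nspl p := inf_le_right
  have hcard : Nat.card ((Hint σ).subgroupOf (Nspl p)) = m := by
    rw [Nat.card_congr (Subgroup.subgroupOfEquivOfLe hle).toEquiv]; exact hH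
  have hmi := Subgroup.card_mul_index ((Hint σ).subgroupOf (Nspl p))
  rw [hcard, card_Nspl hodd] at hmi
  have h2 : m * ((Hint σ).subgroupOf (Nspl p)).index = m * k := by rw [hmi, hk]
  exact Nat.eq_of_mul_eq_mul_left hm h2

end ChenAux

open Chen in
/-- The degree `[N : N ∩ gNg⁻¹]` of the double coset `NgN`. -/
def degN (p : ℕ) (g : GL2 p) : ℕ :=
  (Subgroup.map (MulAut.conj g).toMonoidHom (Nspl p)).relIndex (Nspl p)

open Chen in
/-- **Lemma 7.2.** Degrees of the `N`-double cosets in `GL₂(𝔽_p)`: `deg(N) = 1`,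
`deg(Nσ₀N) = 2(p−1)`, `deg(Nσ₋₁N) = (p−1)/2` and `deg(NσₜN) = p−1` for `t ∉ {−1,0,1}`,
where `σ_t = [[1,1],[1,t]]`. -/
theorem deg_doset_sigma (p : ℕ) [Fact p.Prime] (hodd : Odd p) :
    (Nspl p).relIndex (Nspl p) = 1 ∧
    (∀ g : GL2 p, (g : Matrix (Fin 2) (Fin 2) (ZMod p)) = !![1, 1; 1, 0] → degN p g = 2 * (p - 1)) ∧
    (∀ g : GL2 p, (g : Matrix (Fin 2) (Fin 2) (ZMod p)) = !![1, 1; 1, -1] → degN p g = (p - 1) / 2) ∧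
    (∀ t : ZMod p, t ≠ -1 → t ≠ 0 → t ≠ 1 →
      ∀ g : GL2 p, (g : Matrix (Fin 2) (Fin 2) (ZMod p)) = !![1, 1; 1, t] → degN p g = p - 1) := by
  have hp : 1 < p := (Fact.out : p.Prime).one_lt
  refine ⟨Subgroup.relIndex_self _, ?_, ?_, ?_⟩
  · intro g hg
    exact ChenAux.relindex_eq hodd g (p-1) (2*(p-1)) (by omega)
      (ChenAux.card_inter_zero hodd g hg) (by ring)
  · intro g hg
    obtain ⟨n, hn⟩ := hodd
    have h1 : p - 1 = 2 * n := by omega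
    refine ChenAux.relindex_eq ⟨n, hn⟩ g (4*(p-1)) ((p-1)/2) (by omega)
      (ChenAux.card_inter_neg ⟨n, hn⟩ g hg) ?_
    rw [h1]
    have h2 : 2 * n / 2 = n := by omega
    rw [h2]; ring
  · intro t htm1 ht0 ht1 g hg
    have htt : t * t ≠ 1 := by
      intro h
      have h2 : (t - 1) * (t + 1) = 0 := by linear_combination h
      rcases mul_eq_zero.mp h2 with h3 | h3
      · exact ht1 (by linear_combination h3)
      · exact htm1 (by linear_combination h3)
    exact ChenAux.relindex_eq hodd g (2*(p-1)) (p-1) (by omega)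
      (ChenAux.card_inter_gen hodd g t hg ht0 htt) (by ring)
end
end
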